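/- arXiv:1702.03878 — 5 statements merged into one kernel-verified Lean document; each statement's English description precedes it below -/
import Mathlib

section
/- For every countably infinite collection (A_i)_{i<ω} of distinct finite subsets of ℕ, there exists an infinite set I ⊆ ℕ such that the pairwise intersections are constant along I in the following sense: there exist sets X_i for i ∈ I with A_i ∩ A_j = X_i whenever i, j ∈ I and i < j; moreover these X_i form a ⊆-increasing chain (i < j in I implies X_i ⊆ X_j). -/
open Filter

theorem stmt0 (A : ℕ → Finset ℕ) (hA : Function.Injective A) :
    ∃ I : Set ℕ, I.Infinite ∧ ∃ X : ℕ → Finset ℕ,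
      (∀ i ∈ I, ∀ j ∈ I, i < j → A i ∩ A j = X i) ∧
      (∀ i ∈ I, ∀ j ∈ I, i < j → X i ⊆ X j) := by
  classical
  set U : Ultrafilter ℕ := Filter.hyperfilter ℕ with hUdef
  have hX : ∀ i : ℕ, ∃ X : Finset ℕ, {j | A i ∩ A j = X} ∈ U := by
    intro i
    have hcover : (⋃ X ∈ ((A i).powerset : Finset (Finset ℕ)), {j | A i ∩ A j = X})
        ∈ U := by
      have : (⋃ X ∈ ((A i).powerset : Finset (Finset ℕ)), {j | A i ∩ A j = X})
          = Set.univ := by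
        ext j
        simp only [Set.mem_iUnion, Set.mem_univ, iff_true, Set.mem_setOf_eq]
        exact ⟨A i ∩ A j, by simp [Finset.inter_subset_left], rfl⟩
      rw [this]; exact Filter.univ_mem
    obtain ⟨X, _, hX⟩ := (Ultrafilter.finite_biUnion_mem_iff (s := fun X => {j | A i ∩ A j = X})
      (f := U) (((A i).powerset : Finset (Finset ℕ)) : Set (Finset ℕ)).toFinite).mp hcover
    exact ⟨X, hX⟩
  choose X hXmem using hX
  have key : ∀ s : Finset ℕ, (∀ x ∈ s, True) →
      ∃ y, True ∧ ∀ i ∈ s, i < y ∧ A i ∩ A y = X i := by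
    intro s _
    have h1 : ∀ᶠ j in (U : Filter ℕ), ∀ i ∈ s, A i ∩ A j = X i := by
      rw [Filter.eventually_all_finset]
      intro i _
      exact hXmem i
    have h2 : ∀ᶠ j in (U : Filter ℕ), ∀ i ∈ s, i < j := by
      rw [Filter.eventually_all_finset]
      intro i _
      exact Nat.hyperfilter_le_atTop (Filter.eventually_gt_atTop i)
    obtain ⟨y, hy1, hy2⟩ := (h1.and h2).exists
    exact ⟨y, trivial, fun i hi => ⟨hy2 i hi, hy1 i hi⟩⟩
  obtain ⟨f, -, hf⟩ := exists_seq_of_forall_finset_exists (fun _ => True)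
    (fun i j => i < j ∧ A i ∩ A j = X i) key
  have hmono : StrictMono f := strictMono_nat_of_lt_succ fun n =>
    (hf n (n + 1) (Nat.lt_succ_self n)).1
  refine ⟨Set.range f, Set.infinite_range_of_injective hmono.injective, X, ?_, ?_⟩
  · rintro i ⟨m, rfl⟩ j ⟨n, rfl⟩ hij
    exact (hf m n (hmono.lt_iff_lt.mp hij)).2
  · rintro i ⟨m, rfl⟩ j ⟨n, rfl⟩ hij
    have hmn : m < n := hmono.lt_iff_lt.mp hij
    have h1 : A (f m) ∩ A (f n) = X (f m) := (hf m n hmn).2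
    have h2 : A (f m) ∩ A (f (n + 1)) = X (f m) := (hf m (n + 1) (hmn.trans n.lt_succ_self)).2
    have h3 : A (f n) ∩ A (f (n + 1)) = X (f n) := (hf n (n + 1) n.lt_succ_self).2
    rw [← h3]
    intro x hx
    exact Finset.mem_inter.mpr ⟨(h1 ▸ Finset.inter_subset_right) (h1.symm ▸ hx),
      (h2 ▸ Finset.inter_subset_right) (h2.symm ▸ hx)⟩
end

section
/- Whenever F is an infinite antichain under ⊆ consisting of finite subsets of ℕ, there exists an infinite subfamily {A_i : i < ω} ⊆ F and natural numbers {k_i : i < ω} such that k_i ∈ A_i and k_i ∉ A_j for every j ≠ i. -/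
/-!
Fix a non-principal ultrafilter `U` concentrating on `F` and let `L` be the set of points lying in
`U`-almost every member of `F`. No `A ∈ F` is contained in `L`: otherwise `A` would lie inside
`U`-almost every other member, against the antichain property. Since each finite set is eventually
cut by the members of `F` exactly as by `L`, one extracts a sequence `A₀, A₁, …` in `F` such
that every later `Aₙ` agrees with `L` on every earlier `Aₘ`. Any `kᵢ ∈ Aᵢ \ L` then lies in no
other `Aⱼ`.
-/

open Filter Function

variable {α : Type*}

namespace Ultrafilter

def limSet (U : Ultrafilter (Finset α)) : Set α := {x | ∀ᶠ A in (U : Filter (Finset α)), x ∈ A}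

variable (U : Ultrafilter (Finset α))

theorem eventually_mem_iff_mem_limSet (x : α) :
    ∀ᶠ A in (U : Filter (Finset α)), (x ∈ A ↔ x ∈ U.limSet) := by
  rcases U.em (x ∈ ·) with h | h
  · filter_upwards [h] with A hA
    exact iff_of_true hA h
  · filter_upwards [h] with A hA
    exact iff_of_false hA (U.eventually_not.1 h)

theorem eventually_forall_mem_iff_mem_limSet (s : Finset α) :
    ∀ᶠ A in (U : Filter (Finset α)), ∀ x ∈ s, (x ∈ A ↔ x ∈ U.limSet) :=
  (eventually_all_finset s).2 fun x _ => U.eventually_mem_iff_mem_limSet x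

theorem not_coe_subset_limSet {F : Set (Finset α)} (hU : (U : Filter (Finset α)) ≤ cofinite)
    (hF : F ∈ U) (hanti : IsAntichain (· ⊆ ·) F) {A : Finset α} (hA : A ∈ F) :
    ¬ (↑A ⊆ U.limSet) := by
  intro hsub
  obtain ⟨B, hBF, hBA, hAB⟩ := (eventually_mem_set.2 hF).and
    ((eventually_cofinite_ne A).filter_mono hU |>.and
      (U.eventually_forall_mem_iff_mem_limSet A)) |>.exists
  exact hanti hA hBF (Ne.symm hBA) fun x hx => (hAB x hx).2 (hsub hx)

end Ultrafilter

theorem notMem_of_agree_of_notMem {L : Set α} {A : ℕ → Finset α}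
    (hagree : ∀ m n, m < n → ∀ x ∈ A m, (x ∈ A n ↔ x ∈ L)) {i : ℕ} {x : α} (hxA : x ∈ A i)
    (hxL : x ∉ L) {j : ℕ} (hji : j ≠ i) : x ∉ A j := by
  intro hxj
  rcases hji.lt_or_gt with h | h
  · exact hxL ((hagree j i h x hxj).1 hxA)
  · exact hxL ((hagree i j h x hxA).1 hxj)

theorem injective_of_separated {A : ℕ → Finset α} {k : ℕ → α}
    (hk : ∀ i, k i ∈ A i ∧ ∀ j, j ≠ i → k i ∉ A j) : Injective A := by
  intro i j hij
  by_contra hne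
  exact (hk i).2 j (Ne.symm hne) (hij ▸ (hk i).1)

theorem IsAntichain.exists_seq_separated {F : Set (Finset α)} (hinf : F.Infinite)
    (hanti : IsAntichain (· ⊆ ·) F) :
    ∃ A : ℕ → Finset α, (∀ i, A i ∈ F) ∧
      ∃ k : ℕ → α, ∀ i, k i ∈ A i ∧ ∀ j, j ≠ i → k i ∉ A j := by
  have := hinf.cofinite_inf_principal_neBot
  obtain ⟨U, hU⟩ := Ultrafilter.exists_le (cofinite ⊓ 𝓟 F)
  have hUF : F ∈ U := le_principal_iff.1 (hU.trans inf_le_right)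
  obtain ⟨A, hAF, hagree⟩ := exists_seq_of_forall_finset_exists (· ∈ F)
    (fun B C => ∀ x ∈ B, (x ∈ C ↔ x ∈ U.limSet)) fun s _ =>
      ((eventually_mem_set.2 hUF).and ((eventually_all_finset s).2 fun B _ =>
        U.eventually_forall_mem_iff_mem_limSet B)).exists
  have hout : ∀ i, ∃ x ∈ A i, x ∉ U.limSet := fun i => by
    simpa [Set.not_subset] using U.not_coe_subset_limSet (hU.trans inf_le_left) hUF hanti (hAF i)
  choose k hkA hkL using hout
  exact ⟨A, hAF, k, fun i =>
    ⟨hkA i, fun j hji => notMem_of_agree_of_notMem hagree (hkA i) (hkL i) hji⟩⟩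

theorem stmt1 (F : Set (Finset ℕ)) (hinf : F.Infinite)
    (hanti : IsAntichain (· ⊆ ·) F) :
    ∃ A : ℕ → Finset ℕ, (∀ i, A i ∈ F) ∧ Function.Injective A ∧
      ∃ k : ℕ → ℕ, ∀ i, k i ∈ A i ∧ ∀ j, j ≠ i → k i ∉ A j := by
  obtain ⟨A, hAF, k, hk⟩ := hanti.exists_seq_separated hinf
  exact ⟨A, hAF, injective_of_separated hk, k, hk⟩
end

section
/- Let ⊑ be the relation on ordinals defined by β ⊑ α if and only if there is an ordinal γ with γ > CB(β) such that α = β + ω^γ, where CB(β) denotes the last exponent in the Cantor normal form of β (the Cantor-Bendixson rank of β, with CB(0) = 0). Then for every ordinal α, the set {β : α ⊑ β} is well-ordered by ⊑ (i.e., ⊑ is an anti-tree ordering). -/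
open Ordinal

universe u

/-- Cantor–Bendixson rank: the last exponent of the Cantor normal form (`CB 0 = 0`). -/
noncomputable def CB (o : Ordinal) : Ordinal :=
  ((Ordinal.CNF Ordinal.omega0 o).getLast?).elim 0 Prod.fst

/-- The last coefficient of the Cantor normal form. -/
noncomputable def lastCoeff (o : Ordinal) : Ordinal :=
  ((Ordinal.CNF Ordinal.omega0 o).getLast?).elim 0 Prod.snd

/-- The position of `o` in its fan: the last coefficient of the Cantor normal form,
with the convention `i(n) = n + 1` for natural numbers `n` (virtually omitting `0`). -/
noncomputable def placeInFan (o : Ordinal) : Ordinal :=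
  if o < Ordinal.omega0 then o + 1 else lastCoeff o

/-- The anti-tree order: `treeOrd β α` iff `α = β + ω ^ γ` for some `γ > CB β`. -/
def treeOrd (β α : Ordinal) : Prop :=
  ∃ γ : Ordinal, CB β < γ ∧ α = β + Ordinal.omega0 ^ γ

/-- The immediate `treeOrd`-successor of `β`. -/
noncomputable def treeSucc (β : Ordinal) : Ordinal :=
  β + Ordinal.omega0 ^ (CB β + 1)

/-- The set of immediate `treeOrd`-predecessors of `α`. -/
def subfan (α : Ordinal) : Set Ordinal := {γ | treeSucc γ = α}

/-- The fan of `β`: the set of immediate predecessors of the immediate successor of `β`. -/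
def fan (β : Ordinal) : Set Ordinal := subfan (treeSucc β)

open Classical in
/-- The order type of a set of ordinals: the unique `δ` with `S ≃o Set.Iio δ` (0 if none). -/
noncomputable def otp (S : Set Ordinal.{u}) : Ordinal.{u} :=
  if h : ∃ δ : Ordinal.{u}, Nonempty (S ≃o Set.Iio δ) then h.choose else 0

/-- The image of `α ∈ S` under the unique order-preserving bijection of `S` with `otp S`. -/
noncomputable def ordIndex (S : Set Ordinal) (α : Ordinal) : Ordinal :=
  otp {x | x ∈ S ∧ x < α}

/-- `I` is closed in the ordinal `δ` (with its order topology). -/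
def closedIn (I : Set Ordinal) (δ : Ordinal) : Prop :=
  IsClosed {x : Set.Iio δ | (x : Ordinal) ∈ I}

/-- `X` is closed in its supremum. -/
def ClosedInSup (X : Set Ordinal) : Prop := closedIn X (sSup X)

/-- `I` is a skeleton of the ordinal `δ`. -/
def IsSkelOrd (I : Set Ordinal) (δ : Ordinal) : Prop :=
  I ⊆ Set.Iio δ ∧ closedIn I δ ∧ otp I = δ ∧
    ∀ α ∈ I, ∀ β ∈ I, (treeOrd α β ↔ treeOrd (ordIndex I α) (ordIndex I β))

/-- `I` is a skeleton of the set `J`. -/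
def IsSkelSet (I J : Set Ordinal) : Prop :=
  I ⊆ J ∧ IsSkelOrd (ordIndex J '' I) (otp J)

/-- `I` is an `n`-skeleton of the set `J`. -/
def IsNSkelSet (n : ℕ) (I J : Set Ordinal) : Prop :=
  IsSkelSet I J ∧
    ∀ α ∈ J, (fan α ∩ I).Nonempty → placeInFan (ordIndex J α) ≤ (n : Ordinal) → α ∈ I

/-- A collection `(I i)_{i < γ}` of subsets of `δ` is fan preserving. -/
def FanPreserving (γ : Ordinal) (I : Ordinal → Set Ordinal) (δ : Ordinal) : Prop :=
  ∀ α ≤ γ, Order.IsSuccLimit α → ∀ β < δ, (∀ i < α, (fan β ∩ I i).Infinite) →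
    (fan β ∩ ⋂ i ∈ Set.Iio α, I i).Infinite

/-- Sum of the first `i` terms `ω ^ γ` of a Cantor normal form list. -/
noncomputable def partialSum (l : List Ordinal) (i : ℕ) : Ordinal :=
  ((l.take i).map fun γ => Ordinal.omega0 ^ γ).sum

/-- The `i`-th component `C_i` of the Cantor normal form decomposition (for `1 ≤ i`). -/
noncomputable def comp (l : List Ordinal) (i : ℕ) : Set Ordinal :=
  {β | partialSum l (i - 1) < β ∧ β ≤ partialSum l i}

/-- `subtree α` is `{α} ∪ {β : β ⊏ α}`. -/
def subtree (α : Ordinal) : Set Ordinal := insert α {β | treeOrd β α}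

/-- `Tlevel α n` is the set of elements of CB rank `n` in the tree below `α`. -/
def Tlevel (α : Ordinal) (n : ℕ) : Set Ordinal := {β | β ∈ subtree α ∧ CB β = (n : Ordinal)}

/-- `FpowAux k r j = F(ω^k)^r_{k-j}`, defined by downward recursion. -/
noncomputable def FpowAux (k r : ℕ) : ℕ → Set Ordinal
  | 0 => {Ordinal.omega0 ^ (k : Ordinal)}
  | j + 1 => {γ | treeSucc γ ∈ FpowAux k r j ∧ (r : Ordinal) < placeInFan γ}

/-- `F(ω^k)^r_n` (for `n ≤ k`). -/
noncomputable def Fpow (k r n : ℕ) : Set Ordinal := FpowAux k r (k - n)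

/-- `F(α)^r_n`: the copy of `F(ω^k)^r_n` in the tree below `α`, where `k = CB α`. -/
noncomputable def Fgen (α : Ordinal) (r n : ℕ) : Set Ordinal :=
  {β | β ∈ subtree α ∧ ∃ k : ℕ, (k : Ordinal) = CB α ∧ ordIndex (subtree α) β ∈ Fpow k r n}

/-- The collection of `r`-large subsets of `Tlevel α n`. -/
def LargeR (α : Ordinal) (r n : ℕ) : Set (Set Ordinal) :=
  {A | A ⊆ Tlevel α n ∧ Fgen α r n ⊆ A}

/-- The collection of large subsets of `Tlevel α n`. -/
def Large (α : Ordinal) (n : ℕ) : Set (Set Ordinal) := ⋃ r : ℕ, LargeR α r n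

/-- The closed ordinal partition relation `β →_cl (α₀, α₁)²`. -/
def ClRamseyProp (β α₀ α₁ : Ordinal) : Prop :=
  ∀ c : Ordinal → Ordinal → Fin 2,
    ∃ i : Fin 2, ∃ X : Set Ordinal, X ⊆ Set.Iio β ∧
      otp X = (if i = 0 then α₀ else α₁) ∧ ClosedInSup X ∧
      ∀ x ∈ X, ∀ y ∈ X, x < y → c x y = i

/-!
Above `α` the relation `⊑` is the order of exponents: since `CB (β + ω ^ γ) = γ` (the new
term `ω ^ γ` absorbs all smaller terms of the Cantor normal form of `β` and becomes its last
one) and `ω ^ a + ω ^ b = ω ^ b` for `a < b`, the map `γ ↦ α + ω ^ γ` carries `<` on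
`{γ | CB α < γ}` onto `⊑` on `{β | α ⊑ β}`. Hence `⊑` is trichotomous there, and it is
well founded because it is contained in `<`.
-/

lemma CB_opow_mul {e x : Ordinal} (hx : x ≠ 0) (hxω : x < ω) : CB (ω ^ e * x) = e := by
  unfold CB
  rw [← add_zero (ω ^ e * x),
    CNF.opow_mul_add one_lt_omega0 hx hxω (opow_pos e omega0_pos)]
  simp

lemma CB_opow_mul_add {e x y : Ordinal} (hx : x ≠ 0) (hxω : x < ω) (hy : y < ω ^ e)
    (hy0 : y ≠ 0) : CB (ω ^ e * x + y) = CB y := by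
  unfold CB
  rw [CNF.opow_mul_add one_lt_omega0 hx hxω hy, CNF.ne_zero hy0, List.getLast?_cons_cons,
    ← CNF.ne_zero hy0]

lemma CB_add_opow (β γ : Ordinal) : CB (β + ω ^ γ) = γ := by
  induction β using WellFoundedLT.induction with
  | _ β IH =>
  rcases lt_or_ge β (ω ^ γ) with hβγ | hγβ
  · rw [add_omega0_opow hβγ, ← mul_one (ω ^ γ), CB_opow_mul one_ne_zero one_lt_omega0]
  have hβ : β ≠ 0 := (opow_pos γ omega0_pos).trans_le hγβ |>.ne'
  -- Split `β = ω ^ L * q + r` with `r < ω ^ L`: for `γ = L` the new term merges into the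
  -- leading block `ω ^ L * q`, for `γ < L` it only absorbs `r`.
  set L := log ω β
  have hγL : γ ≤ L := (opow_le_iff_le_log one_lt_omega0 hβ).1 hγβ
  have hq : β / ω ^ L ≠ 0 :=
    (Ordinal.div_pos (opow_ne_zero _ omega0_ne_zero)).2 (opow_log_le_self _ hβ) |>.ne'
  have hqω : β / ω ^ L < ω := div_opow_log_lt β one_lt_omega0
  have hr : β % ω ^ L < ω ^ L := Ordinal.mod_lt _ (opow_ne_zero _ omega0_ne_zero)
  have hβ_eq : β + ω ^ γ = ω ^ L * (β / ω ^ L) + (β % ω ^ L + ω ^ γ) := by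
    rw [← add_assoc, Ordinal.div_add_mod]
  rcases hγL.eq_or_lt with rfl | hγL
  · rw [hβ_eq, add_omega0_opow hr, ← mul_add_one]
    exact CB_opow_mul (Order.succ_ne_bot _) (isSuccLimit_omega0.add_one_lt hqω)
  · have hlt : β % ω ^ L + ω ^ γ < ω ^ L :=
      isPrincipal_add_omega0_opow L hr ((opow_lt_opow_iff_right one_lt_omega0).2 hγL)
    rw [hβ_eq, CB_opow_mul_add hq hqω hlt
      ((opow_pos γ omega0_pos).trans_le le_add_self).ne',
      IH _ (hr.trans_le (opow_log_le_self _ hβ))]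

lemma treeOrd.lt {β α : Ordinal} (h : treeOrd β α) : β < α := by
  obtain ⟨γ, -, rfl⟩ := h
  exact lt_add_of_pos_right _ (opow_pos γ omega0_pos)

lemma treeOrd_add_opow_of_lt (α : Ordinal) {a b : Ordinal} (hab : a < b) :
    treeOrd (α + ω ^ a) (α + ω ^ b) :=
  ⟨b, (CB_add_opow α a).symm ▸ hab, by
    rw [add_assoc, add_omega0_opow ((opow_lt_opow_iff_right one_lt_omega0).2 hab)]⟩

lemma treeOrd_trichotomous_of_treeOrd {α β β' : Ordinal} (h : treeOrd α β) (h' : treeOrd α β') :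
    treeOrd β β' ∨ β = β' ∨ treeOrd β' β := by
  obtain ⟨a, -, rfl⟩ := h
  obtain ⟨b, -, rfl⟩ := h'
  rcases lt_trichotomy a b with hab | rfl | hba
  · exact Or.inl (treeOrd_add_opow_of_lt α hab)
  · exact Or.inr (Or.inl rfl)
  · exact Or.inr (Or.inr (treeOrd_add_opow_of_lt α hba))

theorem stmt3 (α : Ordinal) :
    IsWellOrder {β : Ordinal // treeOrd α β} (fun x y => treeOrd x.1 y.1) := by
  refine { wf := ?_, trichotomous := ?_ }
  · exact Subrelation.wf (fun h => treeOrd.lt h) (InvImage.wf Subtype.val Ordinal.lt_wf)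
  · intro x y hxy hyx
    rcases treeOrd_trichotomous_of_treeOrd x.2 y.2 with h | h | h
    exacts [absurd h hxy, Subtype.ext h, absurd h hyx]
end

section
/- Let δ < ω^ω. A set I ⊆ δ is called a skeleton of δ if: (S1) I is closed in δ in the order topology; (S2) the order type of I is δ; (S3) for all α, β ∈ I, α ⊑ β iff f(α) ⊑ f(β), where f is the order isomorphism from I onto δ and ⊑ is the Cantor–Bendixson anti-tree order. Prove: if I is a skeleton of δ then for every α ∈ I, CB(α) = CB(f(α)), where CB denotes Cantor-Bendixson rank. -/
open Ordinal

universe u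

/-!
Write `f` for the order isomorphism of `I` onto `δ`. Comparing order types gives `f x ≤ x` and,
more generally, `f x - f z ≤ x - z`.

If `n = CB (f x) > 0`, write `f x = b + ω ^ n`; then `b + 1 ⊏ f x`, so its preimage `w` satisfies
`w ⊏ x`, i.e. `x = w + ω ^ CB x`, and `ω ^ n = f x - f w ≤ x - w = ω ^ CB x`. Hence
`CB (f x) ≤ CB x`.

If `n = CB (f x) < CB x`, then `f x + ω ^ (n + 1) ≤ x < δ`, and the preimage `y` of
`f x + ω ^ (n + 1)` satisfies `x ⊏ y`, so `CB (f y) = n + 1 ≤ CB x < CB y`: `y` is a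
counterexample of larger rank. Iterating yields elements of `I` of arbitrarily large finite
rank, which is impossible below `δ < ω ^ ω`.
-/

namespace Ordinal

theorem CB_zero : CB 0 = 0 := by simp [CB]

theorem CB_of_mod_opow_log_eq_zero {o : Ordinal} (ho : o ≠ 0)
    (h : o % ω ^ log ω o = 0) : CB o = log ω o := by
  simp [CB, CNF.ne_zero ho, h, CNF.zero_right]

theorem CB_eq_CB_mod_opow_log {o : Ordinal} (ho : o ≠ 0) (h : o % ω ^ log ω o ≠ 0) :
    CB o = CB (o % ω ^ log ω o) := by
  unfold CB
  rw [CNF.ne_zero ho, CNF.ne_zero h, List.getLast?_cons_cons, ← CNF.ne_zero h]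

theorem add_opow_mod_opow_of_lt {γ ℓ : Ordinal} (d : Ordinal) (h : γ < ℓ) :
    (d + ω ^ γ) % ω ^ ℓ = d % ω ^ ℓ + ω ^ γ := by
  have hsum : d % ω ^ ℓ + ω ^ γ < ω ^ ℓ :=
    isPrincipal_add_omega0_opow ℓ (mod_lt d (opow_ne_zero _ omega0_ne_zero))
      ((opow_lt_opow_iff_right one_lt_omega0).2 h)
  conv_lhs => rw [← div_add_mod d (ω ^ ℓ)]
  rw [add_assoc, mul_add_mod_self, mod_eq_of_lt hsum]

theorem add_opow_mod_opow (d γ : Ordinal) : (d + ω ^ γ) % ω ^ γ = 0 := by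
  conv_lhs => rw [← div_add_mod d (ω ^ γ)]
  rw [add_assoc, add_omega0_opow (mod_lt d (opow_ne_zero γ omega0_ne_zero)), ← mul_add_one]
  simp

theorem add_opow_ne_zero (d γ : Ordinal) : d + ω ^ γ ≠ 0 :=
  ((opow_pos γ omega0_pos).trans_le le_add_self).ne'

theorem CB_add_opow (d γ : Ordinal) : CB (d + ω ^ γ) = γ := by
  induction d using WellFoundedLT.induction with
  | _ d IH =>
    have hne := add_opow_ne_zero d γ
    rcases ((opow_le_iff_le_log one_lt_omega0 hne).1 le_add_self).eq_or_lt with hγ | hlt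
    · refine (CB_of_mod_opow_log_eq_zero hne ?_).trans hγ.symm
      rw [← hγ]
      exact add_opow_mod_opow d γ
    · have hd : ω ^ log ω (d + ω ^ γ) ≤ d := by
        by_contra! hd
        exact (opow_log_le_self ω hne).not_gt (isPrincipal_add_omega0_opow _ hd
          ((opow_lt_opow_iff_right one_lt_omega0).2 hlt))
      have hmod := add_opow_mod_opow_of_lt d hlt
      rw [CB_eq_CB_mod_opow_log hne (hmod ▸ add_opow_ne_zero _ γ), hmod]
      exact IH _ ((mod_lt d (opow_ne_zero _ omega0_ne_zero)).trans_le hd)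

theorem exists_add_opow_CB {y : Ordinal} (hy : y ≠ 0) : ∃ d, d + ω ^ CB y = y := by
  induction y using WellFoundedLT.induction with
  | _ y IH =>
    by_cases hr : y % ω ^ log ω y = 0
    · obtain ⟨k, hk⟩ := lt_omega0.1 (div_opow_log_lt y one_lt_omega0)
      cases k with
      | zero => exact absurd hk (by simpa using (div_opow_log_pos ω hy).ne')
      | succ k =>
        refine ⟨ω ^ log ω y * k, ?_⟩
        conv_rhs => rw [← div_add_mod y (ω ^ log ω y), hr, add_zero, hk]
        rw [CB_of_mod_opow_log_eq_zero hy hr, Nat.cast_succ, mul_add_one]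
    · obtain ⟨d, hd⟩ := IH _ (mod_opow_log_lt_self ω hy) hr
      refine ⟨ω ^ log ω y * (y / ω ^ log ω y) + d, ?_⟩
      conv_rhs => rw [← div_add_mod y (ω ^ log ω y), ← hd]
      rw [CB_eq_CB_mod_opow_log hy hr, add_assoc]

theorem opow_CB_le {y : Ordinal} (hy : y ≠ 0) : ω ^ CB y ≤ y := by
  obtain ⟨d, hd⟩ := exists_add_opow_CB hy
  exact le_add_self.trans_eq hd

theorem CB_add (d : Ordinal) {t : Ordinal} (ht : t ≠ 0) : CB (d + t) = CB t := by
  obtain ⟨t', ht'⟩ := exists_add_opow_CB ht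
  conv_lhs => rw [← ht', ← add_assoc]
  exact CB_add_opow _ _

theorem CB_lt_of_lt_opow {t m : Ordinal} (ht : t ≠ 0) (h : t < ω ^ m) : CB t < m :=
  (opow_lt_opow_iff_right one_lt_omega0).1 ((opow_CB_le ht).trans_lt h)

theorem treeOrd_iff {β α : Ordinal} :
    treeOrd β α ↔ CB β < CB α ∧ α = β + ω ^ CB α := by
  constructor
  · rintro ⟨γ, hγ, rfl⟩
    rw [CB_add_opow]
    exact ⟨hγ, rfl⟩
  · rintro ⟨h, hα⟩
    exact ⟨CB α, h, hα⟩

theorem treeOrd_of_lt_of_lt {a w m : Ordinal} (haw : a < w) (hw : w < a + ω ^ m) :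
    treeOrd w (a + ω ^ m) := by
  obtain ⟨t, rfl⟩ := exists_add_of_le haw.le
  have ht : t ≠ 0 := by rintro rfl; simp at haw
  have htm : t < ω ^ m := (add_lt_add_iff_left a).1 hw
  refine ⟨m, ?_, ?_⟩
  · rw [CB_add a ht]
    exact CB_lt_of_lt_opow ht htm
  · rw [add_assoc, add_omega0_opow htm]

theorem add_opow_le_add_opow {z a k m : Ordinal} (hz : z < a + ω ^ m) (hk : k ≤ m) :
    z + ω ^ k ≤ a + ω ^ m := by
  refine (add_le_add_right (opow_le_opow_right omega0_pos hk) z).trans ?_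
  rcases le_or_gt a z with haz | hza
  · obtain ⟨t, rfl⟩ := exists_add_of_le haz
    rw [add_assoc, add_omega0_opow ((add_lt_add_iff_left a).1 hz)]
  · exact add_le_add_left hza.le _

theorem le_of_strictMono_Iio {c d : Ordinal} {g : Set.Iio c → Ordinal} (hg : StrictMono g)
    (hd : ∀ s, g s < d) : c ≤ d := by
  by_contra! h
  let g' : Set.Iio c → Set.Iio c := fun s => ⟨g s, (hd s).trans h⟩
  have hg' : StrictMono g' := fun _ _ hst => hg hst
  exact (hd ⟨d, h⟩).not_ge (hg'.le_apply (x := ⟨d, h⟩))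

theorem sub_lt_sub_right_of_le {a b c : Ordinal} (hc : c ≤ a) (h : a < b) : a - c < b - c :=
  (add_lt_add_iff_left c).1 <| by
    rwa [Ordinal.add_sub_cancel_of_le hc, Ordinal.add_sub_cancel_of_le (hc.trans h.le)]

theorem eq_of_orderIso_Iio {a b : Ordinal} (f : Set.Iio a ≃o Set.Iio b) : a = b :=
  le_antisymm
    (le_of_strictMono_Iio (g := fun s => f s) (fun _ _ h => f.strictMono h) (f · |>.2))
    (le_of_strictMono_Iio (g := fun s => f.symm s) (fun _ _ h => f.symm.strictMono h)
      (f.symm · |>.2))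

theorem otp_eq_of_orderIso {S : Set Ordinal} {μ : Ordinal} (f : S ≃o Set.Iio μ) :
    otp S = μ := by
  have hex : ∃ δ : Ordinal, Nonempty (S ≃o Set.Iio δ) := ⟨μ, ⟨f⟩⟩
  obtain ⟨g⟩ := hex.choose_spec
  rw [otp, dif_pos hex]
  exact eq_of_orderIso_Iio (g.symm.trans f)

theorem nonempty_orderIso_otp {S : Set Ordinal} (h : otp S ≠ 0) :
    Nonempty (S ≃o Set.Iio (otp S)) := by
  by_cases hex : ∃ δ : Ordinal, Nonempty (S ≃o Set.Iio δ)
  · rw [otp, dif_pos hex]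
    exact hex.choose_spec
  · exact absurd (dif_neg hex) h

theorem ordIndex_eq_orderIso_apply {I : Set Ordinal} {δ : Ordinal} (e : I ≃o Set.Iio δ)
    (x : I) : ordIndex I x = e x := by
  refine otp_eq_of_orderIso (StrictMono.orderIsoOfSurjective
    (fun z => ⟨e ⟨z, z.2.1⟩, e.strictMono (Subtype.mk_lt_mk.2 z.2.2)⟩)
    (fun _ _ h => e.strictMono (Subtype.mk_lt_mk.2 h)) fun s => ?_)
  have hs : (s : Ordinal) < δ := s.2.trans (e x).2
  refine ⟨⟨e.symm ⟨s, hs⟩, (e.symm ⟨s, hs⟩).2, e.symm_apply_lt.2 s.2⟩, ?_⟩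
  simp

section OrderIso

variable {I : Set Ordinal} {δ : Ordinal} (e : I ≃o Set.Iio δ)
include e

theorem orderIso_apply_le_of_forall_lt (x : I) {b : Ordinal}
    (h : ∀ z : I, z < x → (z : Ordinal) < b) : (e x : Ordinal) ≤ b :=
  le_of_strictMono_Iio (g := fun s => e.symm ⟨s, lt_trans (b := (e x : Ordinal)) s.2 (e x).2⟩)
    (fun _ _ hst => e.symm.strictMono hst) fun s => h _ (e.symm_apply_lt.2 s.2)

theorem orderIso_apply_le (x : I) : (e x : Ordinal) ≤ x :=
  orderIso_apply_le_of_forall_lt e x fun _ => id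

theorem orderIso_apply_sub_apply_le (z x : I) : (e x : Ordinal) - e z ≤ x - z := by
  have hlt (s : Set.Iio ((e x : Ordinal) - e z)) : (e z : Ordinal) + s < e x := lt_sub.1 s.2
  let w (s : Set.Iio ((e x : Ordinal) - e z)) : I := e.symm ⟨e z + s, (hlt s).trans (e x).2⟩
  have hzw (s) : (z : Ordinal) ≤ w s := e.le_symm_apply.2 (Subtype.mk_le_mk.2 le_self_add)
  refine le_of_strictMono_Iio (g := fun s => (w s : Ordinal) - z) (fun s t hst => ?_) fun s => ?_
  · exact sub_lt_sub_right_of_le (hzw s)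
      (e.symm.strictMono (Subtype.mk_lt_mk.2 (add_lt_add_right (Subtype.coe_lt_coe.2 hst) _)))
  · exact sub_lt_sub_right_of_le (hzw s) (e.symm_apply_lt.2 (hlt s))

variable (he : ∀ x y : I, treeOrd x y ↔ treeOrd (e x) (e y))
include he

theorem CB_orderIso_apply_le (x : I) : CB (e x) ≤ CB x := by
  set n := CB (e x : Ordinal)
  rcases eq_or_ne n 0 with hn | hn
  · rw [hn]
    exact zero_le
  obtain ⟨b, hb⟩ := exists_add_opow_CB fun h : (e x : Ordinal) = 0 => hn (h ▸ CB_zero)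
  have hp' : b + 1 < b + ω ^ n := add_lt_add_right (one_lt_opow.2 ⟨one_lt_omega0, hn⟩) b
  have hp : b + 1 < e x := hb ▸ hp'
  set w := e.symm ⟨b + 1, hp.trans (e x).2⟩
  have hwx : treeOrd (e w) (e x) := by
    rw [show (e w : Ordinal) = b + 1 by simp [w]]
    exact hb ▸ treeOrd_of_lt_of_lt (lt_add_one b) hp'
  obtain ⟨-, hex⟩ := treeOrd_iff.1 hwx
  obtain ⟨-, hx⟩ := treeOrd_iff.1 ((he w x).2 hwx)
  have := orderIso_apply_sub_apply_le e w x
  rw [hex, hx, Ordinal.add_sub_cancel, Ordinal.add_sub_cancel] at this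
  exact (opow_le_opow_iff_right one_lt_omega0).1 this

theorem orderIso_apply_add_opow_succ_le (x : I) (h : CB (e x) < CB x) :
    (e x : Ordinal) + ω ^ (CB (e x) + 1) ≤ x := by
  set n := CB (e x : Ordinal)
  set m := CB (x : Ordinal)
  have hm : m ≠ 0 := (zero_le.trans_lt h).ne'
  obtain ⟨a, ha⟩ := exists_add_opow_CB fun h : (x : Ordinal) = 0 => hm (h ▸ CB_zero)
  have hnm : n + 1 ≤ m := Order.add_one_le_of_lt h
  by_cases hz : ∃ z : I, a < z ∧ z < x
  · obtain ⟨z, haz, hzx⟩ := hz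
    have hzx' : (z : Ordinal) < a + ω ^ m := ha ▸ hzx
    have hex : (e x : Ordinal) = e z + ω ^ n :=
      (treeOrd_iff.1 ((he z x).1 (ha ▸ treeOrd_of_lt_of_lt haz hzx'))).2
    calc (e x : Ordinal) + ω ^ (n + 1) = e z + ω ^ (n + 1) := by
          rw [hex, add_assoc,
            add_omega0_opow ((opow_lt_opow_iff_right one_lt_omega0).2 (lt_add_one n))]
      _ ≤ z + ω ^ (n + 1) := add_le_add_left (orderIso_apply_le e z) _
      _ ≤ a + ω ^ m := add_opow_le_add_opow hzx' hnm
      _ = x := ha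
  · push Not at hz
    have hexa : (e x : Ordinal) ≤ a + 1 := orderIso_apply_le_of_forall_lt e x fun z hzx =>
      Order.lt_add_one_iff.2 (not_lt.1 fun haz => (hz z haz).not_gt hzx)
    calc (e x : Ordinal) + ω ^ (n + 1) ≤ a + 1 + ω ^ (n + 1) := add_le_add_left hexa _
      _ ≤ a + ω ^ m :=
        add_opow_le_add_opow (add_lt_add_right (one_lt_opow.2 ⟨one_lt_omega0, hm⟩) a) hnm
      _ = x := ha

theorem exists_CB_lt_of_CB_orderIso_apply_lt (x : I) (hxδ : (x : Ordinal) < δ)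
    (h : CB (e x) < CB x) : ∃ y : I, CB (e y) < CB y ∧ CB x < CB y := by
  set n := CB (e x : Ordinal)
  have hlt : (e x : Ordinal) + ω ^ (n + 1) < δ :=
    (orderIso_apply_add_opow_succ_le e he x h).trans_lt hxδ
  set y := e.symm ⟨_, hlt⟩
  have hey : (e y : Ordinal) = e x + ω ^ (n + 1) := by simp [y]
  obtain ⟨hxy, -⟩ := treeOrd_iff.1 ((he x y).2 (hey ▸ ⟨n + 1, lt_add_one n, rfl⟩))
  refine ⟨y, ?_, hxy⟩
  rw [hey, CB_add_opow]
  exact (Order.add_one_le_of_lt h).trans_lt hxy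

theorem CB_orderIso_apply (hI : I ⊆ Set.Iio δ) (hδ : δ < ω ^ ω) (x : I) :
    CB (e x) = CB x := by
  refine (CB_orderIso_apply_le e he x).antisymm (not_lt.1 fun hx => ?_)
  obtain ⟨c, hc, hδc⟩ := (lt_opow_of_isSuccLimit omega0_ne_zero isSuccLimit_omega0).1 hδ
  obtain ⟨K, rfl⟩ := lt_omega0.1 hc
  have hclimb (k : ℕ) : ∃ y : I, CB (e y) < CB y ∧ (k : Ordinal) ≤ CB y := by
    induction k with
    | zero => exact ⟨x, hx, zero_le⟩
    | succ k ih =>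
      obtain ⟨y, hy, hky⟩ := ih
      obtain ⟨y', hy', hyy'⟩ := exists_CB_lt_of_CB_orderIso_apply_lt e he y (hI y.2) hy
      exact ⟨y', hy', by exact_mod_cast Order.add_one_le_of_lt (hky.trans_lt hyy')⟩
  obtain ⟨y, hy, hKy⟩ := hclimb K
  have hy0 : (y : Ordinal) ≠ 0 := fun h => (zero_le.trans_lt hy).ne' (h ▸ CB_zero)
  exact ((opow_le_opow_right omega0_pos hKy).trans (opow_CB_le hy0)).trans_lt
    ((hI y.2).trans hδc) |>.false

end OrderIso

end Ordinal

theorem stmt6 (δ : Ordinal) (hδ : δ < Ordinal.omega0 ^ Ordinal.omega0)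
    (I : Set Ordinal) (hI : IsSkelOrd I δ) :
    ∀ α ∈ I, CB α = CB (ordIndex I α) := by
  obtain ⟨hsub, -, hotp, htree⟩ := hI
  intro α hα
  have hδ0 : otp I ≠ 0 := hotp ▸ (zero_le.trans_lt (hsub hα)).ne'
  obtain ⟨e⟩ := nonempty_orderIso_otp hδ0
  rw [hotp] at e
  have he (x : I) : ordIndex I x = e x := ordIndex_eq_orderIso_apply e x
  rw [he ⟨α, hα⟩]
  refine (CB_orderIso_apply e (fun x y => ?_) hsub hδ ⟨α, hα⟩).symm
  rw [← he, ← he]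
  exact htree x x.2 y y.2
end

section
/- Let G = (V, E) be a graph, and let A, B ⊆ V be infinite disjoint sets such that A ⊳ B (for every cofinal—equivalently, infinite—subset X of A, the set B \ N(X) is finite) and N(a) ∩ B is finite for every a ∈ A. Then there exist an infinite A₀ ⊆ A and a cofinite B₀ ⊆ B such that N(b) ∩ A₀ is cofinite in A₀ for every b ∈ B₀. -/
theorem stmt15 {V : Type*} (G : SimpleGraph V) (A B : Set V)
    (hAinf : A.Infinite) (hBinf : B.Infinite) (hdisj : Disjoint A B)
    (hopp : ∀ X ⊆ A, X.Infinite → (B \ ⋃ v ∈ X, G.neighborSet v).Finite)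
    (hfin : ∀ a ∈ A, (G.neighborSet a ∩ B).Finite) :
    ∃ A₀ ⊆ A, A₀.Infinite ∧ ∃ B₀ ⊆ B, (B \ B₀).Finite ∧
      ∀ b ∈ B₀, (A₀ \ G.neighborSet b).Finite := by
  classical
  by_contra hcon
  push_neg at hcon
  -- every infinite subset A' of A has an infinite "bad" set
  have hbad : ∀ A' ⊆ A, A'.Infinite →
      {b | b ∈ B ∧ (A' \ G.neighborSet b).Infinite}.Infinite := by
    intro A' hsub hinf
    by_contra hfinbad
    rw [Set.not_infinite] at hfinbad
    obtain ⟨b, hbB, hb2⟩ := hcon A' hsub hinf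
      (B \ {b | b ∈ B ∧ (A' \ G.neighborSet b).Infinite}) Set.diff_subset
      (by
        refine hfinbad.subset ?_
        intro x hx
        simp only [Set.mem_diff, Set.mem_setOf_eq, not_and, not_not] at hx ⊢
        tauto)
    exact hb2 (by
      by_contra h
      exact hbB.2 ⟨hbB.1, h⟩)
  -- the invariant for states (A', as, bs)
  let P : Set V × List V × List V → Prop := fun p =>
    p.1 ⊆ A ∧ p.1.Infinite ∧ (∀ a ∈ p.2.1, a ∈ A ∧ a ∉ p.1) ∧ p.2.1.Nodup ∧
    (∀ b ∈ p.2.2, b ∈ B) ∧ p.2.2.Nodup ∧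
    (∀ b ∈ p.2.2, ∀ a ∈ p.2.1, ¬ G.Adj b a) ∧
    (∀ b ∈ p.2.2, ∀ a ∈ p.1, ¬ G.Adj b a)
  have hP0 : P (A, [], []) := by
    refine ⟨Set.Subset.rfl, hAinf, ?_, List.nodup_nil, ?_, List.nodup_nil, ?_, ?_⟩ <;> simp
  have hstep : ∀ p, P p → ∃ a b A', P (A', a :: p.2.1, b :: p.2.2) := by
    rintro ⟨A', as, bs⟩ ⟨h1, h2, h3, h4, h5, h6, h7, h8⟩
    simp only at h1 h2 h3 h4 h5 h6 h7 h8 ⊢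
    have hBadInf := hbad A' h1 h2
    have hE : ((⋃ a ∈ as, G.neighborSet a ∩ B) ∪ {x | x ∈ bs}).Finite := by
      refine Set.Finite.union ?_ bs.finite_toSet
      refine Set.Finite.biUnion as.finite_toSet ?_
      intro a ha
      exact hfin a (h3 a ha).1
    obtain ⟨b, hbBad, hbE⟩ := (hBadInf.diff hE).nonempty
    have hbB : b ∈ B := hbBad.1
    have hA'' : (A' \ G.neighborSet b).Infinite := hbBad.2
    obtain ⟨a, ha⟩ := hA''.nonempty
    refine ⟨a, b, (A' \ G.neighborSet b) \ {a}, ?_, ?_, ?_, ?_, ?_, ?_, ?_, ?_⟩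
    · exact fun x hx => h1 hx.1.1
    · exact hA''.diff (Set.finite_singleton a)
    · intro x hx
      rcases List.mem_cons.1 hx with rfl | hx
      · exact ⟨h1 ha.1, fun hc => hc.2 rfl⟩
      · exact ⟨(h3 x hx).1, fun hc => (h3 x hx).2 hc.1.1⟩
    · refine List.nodup_cons.2 ⟨?_, h4⟩
      intro hc
      exact (h3 a hc).2 ha.1
    · intro x hx
      rcases List.mem_cons.1 hx with rfl | hx
      · exact hbB
      · exact h5 x hx
    · refine List.nodup_cons.2 ⟨?_, h6⟩
      intro hc
      exact hbE (Or.inr hc)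
    · intro b' hb' x hx
      rcases List.mem_cons.1 hb' with hb'e | hb's
      · rcases List.mem_cons.1 hx with hxe | hxs
        · subst hb'e; subst hxe
          intro hadj
          exact ha.2 ((G.mem_neighborSet _ _).2 hadj)
        · subst hb'e
          intro hadj
          exact hbE (Or.inl (Set.mem_iUnion.2 ⟨x, Set.mem_iUnion.2
            ⟨hxs, ⟨(G.mem_neighborSet _ _).2 hadj.symm, hbB⟩⟩⟩))
      · rcases List.mem_cons.1 hx with hxe | hxs
        · subst hxe
          exact h8 b' hb's x ha.1
        · exact h7 b' hb's x hxs
    · intro b' hb' x hx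
      rcases List.mem_cons.1 hb' with hb'e | hb's
      · subst hb'e
        intro hadj
        exact hx.1.2 ((G.mem_neighborSet _ _).2 hadj)
      · exact h8 b' hb's x hx.1.1
  choose fa fb fA hPf using hstep
  let step : {p // P p} → {p // P p} := fun q =>
    ⟨(fA q.1 q.2, fa q.1 q.2 :: q.1.2.1, fb q.1 q.2 :: q.1.2.2), hPf q.1 q.2⟩
  let s : ℕ → {p // P p} := fun n => step^[n] ⟨(A, [], []), hP0⟩
  have hs_succ : ∀ n, s (n + 1) = step (s n) := by
    intro n
    simp only [s, Function.iterate_succ_apply']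
  -- lists
  have hlen : ∀ n, ((s n).1.2.1.length = n) ∧ ((s n).1.2.2.length = n) := by
    intro n
    induction n with
    | zero => simp [s]
    | succ n ih =>
      rw [hs_succ n]
      simp only [step, List.length_cons]
      omega
  have hsub_a : ∀ n, ∀ x ∈ (s n).1.2.1, x ∈ (s (n+1)).1.2.1 := by
    intro n x hx
    rw [hs_succ n]
    exact List.mem_cons_of_mem _ hx
  have hsub_b : ∀ n, ∀ x ∈ (s n).1.2.2, x ∈ (s (n+1)).1.2.2 := by
    intro n x hx
    rw [hs_succ n]
    exact List.mem_cons_of_mem _ hx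
  have hmono_a : ∀ m n, m ≤ n → ∀ x ∈ (s m).1.2.1, x ∈ (s n).1.2.1 := by
    intro m n
    induction n with
    | zero => intro hmn x hx; rw [Nat.le_zero.1 hmn] at hx; exact hx
    | succ n ih =>
      intro hmn x hx
      rcases hmn.lt_or_eq with h | h
      · exact hsub_a n x (ih (Nat.lt_succ_iff.1 h) x hx)
      · rw [h] at hx; exact hx
  have hmono_b : ∀ m n, m ≤ n → ∀ x ∈ (s m).1.2.2, x ∈ (s n).1.2.2 := by
    intro m n
    induction n with
    | zero => intro hmn x hx; rw [Nat.le_zero.1 hmn] at hx; exact hx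
    | succ n ih =>
      intro hmn x hx
      rcases hmn.lt_or_eq with h | h
      · exact hsub_b n x (ih (Nat.lt_succ_iff.1 h) x hx)
      · rw [h] at hx; exact hx
  -- the two infinite sets
  set X : Set V := {x | ∃ n, x ∈ (s n).1.2.1} with hX
  set T : Set V := {x | ∃ n, x ∈ (s n).1.2.2} with hT
  have hinf_of_lists : ∀ (Y : Set V) (L : ℕ → List V),
      (∀ n, (L n).Nodup) → (∀ n, (L n).length = n) →
      (∀ n, ∀ x ∈ L n, x ∈ Y) → Y.Infinite := by
    intro Y L hnd hlenL hmem
    rw [Set.infinite_coe_iff.symm]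
    by_contra hfinY
    rw [not_infinite_iff_finite] at hfinY
    have hYf : Y.Finite := Set.toFinite Y
    set N := hYf.toFinset.card + 1
    have h1 : (L N).toFinset ⊆ hYf.toFinset := by
      intro x hx
      rw [Set.Finite.mem_toFinset]
      exact hmem N x (List.mem_toFinset.1 hx)
    have h2 : (L N).toFinset.card = N := by
      rw [List.toFinset_card_of_nodup (hnd N), hlenL N]
    have := Finset.card_le_card h1
    omega
  have hXinf : X.Infinite := by
    refine hinf_of_lists X (fun n => (s n).1.2.1) (fun n => (s n).2.2.2.2.1)
      (fun n => (hlen n).1) ?_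
    exact fun n x hx => ⟨n, hx⟩
  have hTinf : T.Infinite := by
    refine hinf_of_lists T (fun n => (s n).1.2.2) (fun n => (s n).2.2.2.2.2.2.1)
      (fun n => (hlen n).2) ?_
    exact fun n x hx => ⟨n, hx⟩
  have hXsub : X ⊆ A := by
    rintro x ⟨n, hx⟩
    exact ((s n).2.2.2.1 x hx).1
  have hTsub : T ⊆ B \ ⋃ v ∈ X, G.neighborSet v := by
    rintro b ⟨n, hb⟩
    refine ⟨(s n).2.2.2.2.2.1 b hb, ?_⟩
    intro hc
    simp only [Set.mem_iUnion, SimpleGraph.mem_neighborSet] at hc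
    obtain ⟨a, ⟨m, ha⟩, hadj⟩ := hc
    have hbk := hmono_b n (max m n) (le_max_right m n) b hb
    have hak := hmono_a m (max m n) (le_max_left m n) a ha
    exact (s (max m n)).2.2.2.2.2.2.2.1 b hbk a hak hadj.symm
  exact ((hopp X hXsub hXinf).not_infinite) (hTinf.mono hTsub)
end
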